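/- arXiv:1412.2856 — 2 statements merged into one kernel-verified Lean document; each statement's English description precedes it below -/
import Mathlib

section
/- Suppose X, Y, Z : [0, Δ] → [0, ∞) are differentiable and satisfy X' > (1/4) X - ε (Y + Z), |Y'| < ε (X + Y + Z), Z' < -(1/4) Z + ε (X + Y) on [0, Δ], where ε ∈ (0, 1/4) and η > 0 satisfy (1/4 - 2ε) η - (2 + η²) ε > 0 and 1/4 - (1 + η) ε > 0. Define κ = η X - Y - Z. If κ(s') ≥ 0 for some s' ∈ [0, Δ], then κ(s) > 0 for all s ∈ (s', Δ], provided additionally X(s') + Z(s') > 0. -/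
/-!
Along the flow, `κ' = η X' - Y' - Z'`, and inserting the three differential inequalities and
eliminating `Y` through `Y ≤ η X - Z` gives `κ' > ((1/4 - 2ε)η - (2 + η²)ε) X + (1/4 + ε) Z ≥ 0`
wherever `κ ≥ 0`. So `κ` can never cross `0` downwards (a fencing argument), hence stays
nonnegative on `[s', Δ]`, hence has positive derivative there and is strictly increasing.
-/

open Set

section Fencing

variable {f f' : ℝ → ℝ} {a b : ℝ}

theorem nonneg_of_hasDerivAt_of_nonneg_imp_pos (hf : ∀ x ∈ Icc a b, HasDerivAt f (f' x) x)
    (ha : 0 ≤ f a) (hpos : ∀ x ∈ Icc a b, 0 ≤ f x → 0 < f' x) :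
    ∀ x ∈ Icc a b, 0 ≤ f x := by
  intro x hx
  have hcont : ContinuousOn (fun x => -f x) (Icc a b) := fun y hy =>
    (hf y hy).continuousAt.neg.continuousWithinAt
  have hneg : -f x ≤ 0 :=
    image_le_of_deriv_right_lt_deriv_boundary' hcont
      (fun y hy => (hf y (Ico_subset_Icc_self hy)).neg.hasDerivWithinAt)
      (by simpa using ha) continuousOn_const (fun _ _ => hasDerivWithinAt_const _ _ _)
      (fun y hy hy0 => by
        have := hpos y (Ico_subset_Icc_self hy) (by linarith)
        linarith)
      hx
  linarith

theorem pos_of_hasDerivAt_of_nonneg_imp_pos (hf : ∀ x ∈ Icc a b, HasDerivAt f (f' x) x)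
    (ha : 0 ≤ f a) (hpos : ∀ x ∈ Icc a b, 0 ≤ f x → 0 < f' x) :
    ∀ x ∈ Ioc a b, 0 < f x := by
  have hnonneg := nonneg_of_hasDerivAt_of_nonneg_imp_pos hf ha hpos
  have hmono : StrictMonoOn f (Icc a b) := by
    refine strictMonoOn_of_deriv_pos (convex_Icc a b)
      (fun x hx => (hf x hx).continuousAt.continuousWithinAt) fun x hx => ?_
    rw [interior_Icc] at hx
    rw [(hf x (Ioo_subset_Icc_self hx)).deriv]
    exact hpos x (Ioo_subset_Icc_self hx) (hnonneg x (Ioo_subset_Icc_self hx))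
  intro x hx
  have hab : a ≤ b := hx.1.le.trans hx.2
  exact ha.trans_lt (hmono (left_mem_Icc.mpr hab) (Ioc_subset_Icc_self hx) hx.1)

end Fencing

theorem cone_deriv_gt {ε η x y z x' y' z' : ℝ} (hε : 0 < ε) (hη : 0 < η)
    (hx' : x' > 1 / 4 * x - ε * (y + z)) (hy' : |y'| < ε * (x + y + z))
    (hz' : z' < -(1 / 4) * z + ε * (x + y)) (hκ : 0 ≤ η * x - y - z) :
    η * x' - y' - z' > ((1 / 4 - 2 * ε) * η - (2 + η ^ 2) * ε) * x + (1 / 4 + ε) * z := by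
  have hy'_lt := (abs_lt.mp hy').2
  nlinarith [mul_lt_mul_of_pos_left hx' hη, mul_nonneg (by positivity : 0 ≤ (η + 2) * ε) hκ]

theorem stmt_10_general (Δ ε η : ℝ) (hε : ε ∈ Set.Ioo (0 : ℝ) (1 / 4)) (hη : 0 < η)
    (hcone : (1 / 4 - 2 * ε) * η - (2 + η ^ 2) * ε > 0)
    (X Y Z X' Y' Z' : ℝ → ℝ)
    (hXpos : ∀ s ∈ Set.Icc 0 Δ, 0 ≤ X s)
    (hZpos : ∀ s ∈ Set.Icc 0 Δ, 0 ≤ Z s)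
    (hdX : ∀ s ∈ Set.Icc 0 Δ, HasDerivAt X (X' s) s)
    (hdY : ∀ s ∈ Set.Icc 0 Δ, HasDerivAt Y (Y' s) s)
    (hdZ : ∀ s ∈ Set.Icc 0 Δ, HasDerivAt Z (Z' s) s)
    (hX' : ∀ s ∈ Set.Icc 0 Δ, X' s > 1 / 4 * X s - ε * (Y s + Z s))
    (hY' : ∀ s ∈ Set.Icc 0 Δ, |Y' s| < ε * (X s + Y s + Z s))
    (hZ' : ∀ s ∈ Set.Icc 0 Δ, Z' s < -(1 / 4) * Z s + ε * (X s + Y s))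
    (κ : ℝ → ℝ) (hκ : ∀ s, κ s = η * X s - Y s - Z s)
    (s' : ℝ) (hs' : s' ∈ Set.Icc 0 Δ) (hκs' : κ s' ≥ 0) :
    ∀ s ∈ Set.Ioc s' Δ, κ s > 0 := by
  have hsub : Icc s' Δ ⊆ Icc 0 Δ := Icc_subset_Icc_left hs'.1
  rw [show κ = fun s => η * X s - Y s - Z s from funext hκ] at hκs' ⊢
  refine pos_of_hasDerivAt_of_nonneg_imp_pos (f' := fun s => η * X' s - Y' s - Z' s)
    (fun s hs => (((hdX s (hsub hs)).const_mul η).sub (hdY s (hsub hs))).sub (hdZ s (hsub hs)))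
    hκs' fun s hs hκs => ?_
  have hs0 := hsub hs
  have hbound := cone_deriv_gt hε.1 hη (hX' s hs0) (hY' s hs0) (hZ' s hs0) hκs
  have hrhs : 0 ≤ ((1 / 4 - 2 * ε) * η - (2 + η ^ 2) * ε) * X s + (1 / 4 + ε) * Z s :=
    add_nonneg (mul_nonneg hcone.le (hXpos s hs0)) (mul_nonneg (by linarith [hε.1]) (hZpos s hs0))
  exact hrhs.trans_lt hbound

theorem stmt_10 (Δ ε η : ℝ) (hΔ : 0 ≤ Δ) (hε : ε ∈ Set.Ioo (0 : ℝ) (1 / 4)) (hη : 0 < η)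
    (hcone : (1 / 4 - 2 * ε) * η - (2 + η ^ 2) * ε > 0)
    (hcone' : 1 / 4 - (1 + η) * ε > 0)
    (X Y Z X' Y' Z' : ℝ → ℝ)
    (hXpos : ∀ s ∈ Set.Icc 0 Δ, 0 ≤ X s) (hYpos : ∀ s ∈ Set.Icc 0 Δ, 0 ≤ Y s)
    (hZpos : ∀ s ∈ Set.Icc 0 Δ, 0 ≤ Z s)
    (hdX : ∀ s ∈ Set.Icc 0 Δ, HasDerivAt X (X' s) s)
    (hdY : ∀ s ∈ Set.Icc 0 Δ, HasDerivAt Y (Y' s) s)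
    (hdZ : ∀ s ∈ Set.Icc 0 Δ, HasDerivAt Z (Z' s) s)
    (hX' : ∀ s ∈ Set.Icc 0 Δ, X' s > 1 / 4 * X s - ε * (Y s + Z s))
    (hY' : ∀ s ∈ Set.Icc 0 Δ, |Y' s| < ε * (X s + Y s + Z s))
    (hZ' : ∀ s ∈ Set.Icc 0 Δ, Z' s < -(1 / 4) * Z s + ε * (X s + Y s))
    (κ : ℝ → ℝ) (hκ : ∀ s, κ s = η * X s - Y s - Z s)
    (s' : ℝ) (hs' : s' ∈ Set.Icc 0 Δ) (hκs' : κ s' ≥ 0) (hXZ : X s' + Z s' > 0) :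
    ∀ s ∈ Set.Ioc s' Δ, κ s > 0 :=
  stmt_10_general Δ ε η hε hη hcone X Y Z X' Y' Z' hXpos hZpos hdX hdY hdZ hX' hY' hZ' κ hκ s' hs'
    hκs'
end

section
/- Suppose a, b : ℝ × (0,T) → ℝ are smooth, b > 0 on an open set where the computation takes place, and (a,b) solves a_t = a_xx + a² - b², b_t = b_xx + 2ab. Then γ := a/b satisfies γ_t = γ_xx + 2 ν γ_x - (a² + b²)/b, where ν = b_x / b. -/
theorem stmt_16 (a b : ℝ → ℝ → ℝ) (U : Set (ℝ × ℝ)) (hU : IsOpen U)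
    (ha : ContDiff ℝ (⊤ : ℕ∞) fun p : ℝ × ℝ => a p.1 p.2)
    (hb : ContDiff ℝ (⊤ : ℕ∞) fun p : ℝ × ℝ => b p.1 p.2)
    (hbpos : ∀ p ∈ U, 0 < b p.1 p.2)
    (heqa : ∀ p ∈ U,
      deriv (fun t => a p.1 t) p.2
        = iteratedDeriv 2 (fun x => a x p.2) p.1 + (a p.1 p.2) ^ 2 - (b p.1 p.2) ^ 2)
    (heqb : ∀ p ∈ U,
      deriv (fun t => b p.1 t) p.2
        = iteratedDeriv 2 (fun x => b x p.2) p.1 + 2 * a p.1 p.2 * b p.1 p.2)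
    (γ ν : ℝ → ℝ → ℝ)
    (hγ : ∀ x t, γ x t = a x t / b x t)
    (hν : ∀ x t, ν x t = deriv (fun x' => b x' t) x / b x t) :
    ∀ p ∈ U,
      deriv (fun t => γ p.1 t) p.2
        = iteratedDeriv 2 (fun x => γ x p.2) p.1
          + 2 * ν p.1 p.2 * deriv (fun x => γ x p.2) p.1
          - ((a p.1 p.2) ^ 2 + (b p.1 p.2) ^ 2) / b p.1 p.2 := by
  intro p hp
  obtain ⟨x₀, t₀⟩ := p
  simp only at *
  have ha' : ContDiff ℝ (⊤ : ℕ∞) fun p : ℝ × ℝ => a p.1 p.2 := ha.of_le (by simp)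
  have hb' : ContDiff ℝ (⊤ : ℕ∞) fun p : ℝ × ℝ => b p.1 p.2 := hb.of_le (by simp)
  -- smoothness of the x-sections
  have hA : ContDiff ℝ (⊤ : ℕ∞) (fun x => a x t₀) :=
    ha'.comp (contDiff_id.prodMk contDiff_const)
  have hB : ContDiff ℝ (⊤ : ℕ∞) (fun x => b x t₀) :=
    hb'.comp (contDiff_id.prodMk contDiff_const)
  have hA1 : ContDiff ℝ (⊤ : ℕ∞) (deriv (fun x => a x t₀)) :=
    (contDiff_infty_iff_deriv.mp hA).2
  have hB1 : ContDiff ℝ (⊤ : ℕ∞) (deriv (fun x => b x t₀)) :=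
    (contDiff_infty_iff_deriv.mp hB).2
  -- smoothness of the t-sections
  have hAt : ContDiff ℝ (⊤ : ℕ∞) (fun t => a x₀ t) :=
    ha'.comp (contDiff_const.prodMk contDiff_id)
  have hBt : ContDiff ℝ (⊤ : ℕ∞) (fun t => b x₀ t) :=
    hb'.comp (contDiff_const.prodMk contDiff_id)
  have hbne : b x₀ t₀ ≠ 0 := (hbpos _ hp).ne'
  -- time derivative of γ
  have hγt : (fun t => γ x₀ t) = fun t => a x₀ t / b x₀ t := funext fun t => hγ x₀ t
  have hderivt : deriv (fun t => γ x₀ t) t₀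
      = (deriv (fun t => a x₀ t) t₀ * b x₀ t₀ - a x₀ t₀ * deriv (fun t => b x₀ t) t₀)
        / (b x₀ t₀) ^ 2 := by
    rw [hγt]
    exact deriv_div (hAt.differentiable (by simp) t₀) (hBt.differentiable (by simp) t₀) hbne
  -- spatial neighborhood where b ≠ 0
  have hScont : Continuous fun x => b x t₀ := hB.continuous
  have hSopen : IsOpen {x : ℝ | 0 < b x t₀} := isOpen_lt continuous_const hScont
  have hx₀S : x₀ ∈ {x : ℝ | 0 < b x t₀} := hbpos _ hp
  -- first spatial derivative of γ, eventually
  set A1 := deriv (fun x => a x t₀)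
  set B1 := deriv (fun x => b x t₀)
  have hγx : (fun x => γ x t₀) = fun x => a x t₀ / b x t₀ := funext fun x => hγ x t₀
  have hev : ∀ x ∈ {x : ℝ | 0 < b x t₀},
      deriv (fun x => γ x t₀) x
        = (A1 x * b x t₀ - a x t₀ * B1 x) / (b x t₀) ^ 2 := by
    intro x hx
    rw [hγx]
    exact deriv_div (hA.differentiable (by simp) x) (hB.differentiable (by simp) x) hx.ne'
  have hevnhds : deriv (fun x => γ x t₀)
      =ᶠ[nhds x₀] fun x => (A1 x * b x t₀ - a x t₀ * B1 x) / (b x t₀) ^ 2 :=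
    Filter.eventually_of_mem (hSopen.mem_nhds hx₀S) hev
  have hderivx : deriv (fun x => γ x t₀) x₀
      = (A1 x₀ * b x₀ t₀ - a x₀ t₀ * B1 x₀) / (b x₀ t₀) ^ 2 := hev x₀ hx₀S
  -- second spatial derivative
  have hiter2 : iteratedDeriv 2 (fun x => γ x t₀) x₀
      = deriv (fun x => (A1 x * b x t₀ - a x t₀ * B1 x) / (b x t₀) ^ 2) x₀ := by
    rw [show (2 : ℕ) = 1 + 1 from rfl, iteratedDeriv_succ, iteratedDeriv_one]
    exact hevnhds.deriv_eq
  have hnumdiff : DifferentiableAt ℝ (fun x => A1 x * b x t₀ - a x t₀ * B1 x) x₀ :=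
    ((hA1.differentiable (by simp) x₀).mul (hB.differentiable (by simp) x₀)).sub
      ((hA.differentiable (by simp) x₀).mul (hB1.differentiable (by simp) x₀))
  have hdendiff : DifferentiableAt ℝ (fun x => (b x t₀) ^ 2) x₀ :=
    (hB.differentiable (by simp) x₀).pow 2
  have hden_ne : ((b x₀ t₀) ^ 2 : ℝ) ≠ 0 := pow_ne_zero 2 hbne
  have hderivnum : deriv (fun x => A1 x * b x t₀ - a x t₀ * B1 x) x₀
      = (deriv A1 x₀ * b x₀ t₀ + A1 x₀ * B1 x₀)
        - (A1 x₀ * B1 x₀ + a x₀ t₀ * deriv B1 x₀) := by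
    rw [deriv_fun_sub ((hA1.differentiable (by simp) x₀).fun_mul (hB.differentiable (by simp) x₀))
        ((hA.differentiable (by simp) x₀).fun_mul (hB1.differentiable (by simp) x₀)),
      deriv_fun_mul (hA1.differentiable (by simp) x₀) (hB.differentiable (by simp) x₀),
      deriv_fun_mul (hA.differentiable (by simp) x₀) (hB1.differentiable (by simp) x₀)]
  have hderivden : deriv (fun x => (b x t₀) ^ 2) x₀ = 2 * b x₀ t₀ * B1 x₀ := by
    have := ((hB.differentiable (by simp) x₀).hasDerivAt).fun_pow 2
    simpa [mul_comm, mul_assoc, mul_left_comm] using this.deriv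
  have h2 : iteratedDeriv 2 (fun x => γ x t₀) x₀
      = ((deriv A1 x₀ * b x₀ t₀ - a x₀ t₀ * deriv B1 x₀) * (b x₀ t₀) ^ 2
          - (A1 x₀ * b x₀ t₀ - a x₀ t₀ * B1 x₀) * (2 * b x₀ t₀ * B1 x₀))
        / ((b x₀ t₀) ^ 2) ^ 2 := by
    rw [hiter2, deriv_fun_div hnumdiff hdendiff hden_ne, hderivnum, hderivden]
    ring_nf
  -- second derivatives of a, b in x as iteratedDeriv
  have hA2 : iteratedDeriv 2 (fun x => a x t₀) x₀ = deriv A1 x₀ := by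
    rw [show (2 : ℕ) = 1 + 1 from rfl, iteratedDeriv_succ, iteratedDeriv_one]
  have hB2 : iteratedDeriv 2 (fun x => b x t₀) x₀ = deriv B1 x₀ := by
    rw [show (2 : ℕ) = 1 + 1 from rfl, iteratedDeriv_succ, iteratedDeriv_one]
  have ea := heqa _ hp
  have eb := heqb _ hp
  simp only at ea eb
  rw [hA2] at ea
  rw [hB2] at eb
  rw [hderivt, h2, hderivx, hν, ea, eb]
  field_simp
  ring
end
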